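/- arXiv:2410.17645 — 7 statements merged into one kernel-verified Lean document; each statement's English description precedes it below -/
import Mathlib

section
/- Let 0 < k, s₁ > 0, s₂ > 0, c ≥ 0, and let f, g : [0, R] → ℝ satisfy |f(x)| ≤ C₁ x^{s₁ - k} e^{c x^k} / Γ(s₁/k) and |g(x)| ≤ C₂ x^{s₂ - k} e^{c x^k} / Γ(s₂/k) for x ∈ (0, R]. Then for all ξ ∈ (0, R], the k-convolution (f ∗ₖ g)(ξ) := ∫₀^ξ f((ξ^k - η^k)^{1/k}) g(η) d(η^k) satisfies |(f ∗ₖ g)(ξ)| ≤ C₁ C₂ ξ^{s₁+s₂-k} e^{c ξ^k} / Γ((s₁+s₂)/k). -/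
/-!
Substituting `t = η ^ k` turns the `k`-convolution into an ordinary one on `[0, ξ ^ k]`.
The exponential weights multiply to `exp (c * ξ ^ k)` because `(ξ ^ k - η ^ k) + η ^ k = ξ ^ k`,
so the integrand is dominated by a constant times the `k`-convolution of the two power functions,
which is a scaled Beta integral `ξ ^ (s₁ + s₂ - k) * B(s₂ / k, s₁ / k)`; the Gamma factors of
`B` cancel those of the hypotheses.
-/

open Real MeasureTheory Set

theorem integral_rpow_mul_sub_rpow {p q a : ℝ} (hp : 0 < p) (hq : 0 < q) (ha : 0 < a) :
    ∫ t in (0:ℝ)..a, t ^ (p - 1) * (a - t) ^ (q - 1)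
      = a ^ (p + q - 1) * ProbabilityTheory.beta p q := by
  have hB : Complex.betaIntegral p q = (ProbabilityTheory.beta p q : ℂ) := by
    rw [Complex.betaIntegral_eq_Gamma_mul_div _ _ (by simpa) (by simpa), ProbabilityTheory.beta,
      ← Complex.ofReal_add, Complex.Gamma_ofReal, Complex.Gamma_ofReal, Complex.Gamma_ofReal]
    push_cast; rfl
  have h := Complex.betaIntegral_scaled p q ha
  rw [hB] at h
  apply Complex.ofReal_injective
  rw [← intervalIntegral.integral_ofReal, Complex.ofReal_mul, Complex.ofReal_cpow ha.le]
  push_cast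
  rw [← h]
  refine intervalIntegral.integral_congr fun t ht => ?_
  rw [uIcc_of_le ha.le] at ht
  simp only [Complex.ofReal_cpow ht.1, Complex.ofReal_cpow (sub_nonneg.2 ht.2)]
  push_cast
  rfl

theorem intervalIntegral_comp_rpow {E : Type*} [NormedAddCommGroup E] [NormedSpace ℝ E]
    (h : ℝ → E) {k ξ : ℝ} (hk : 0 < k) (hξ : 0 ≤ ξ) :
    ∫ η in (0:ℝ)..ξ, (k * η ^ (k - 1)) • h (η ^ k) = ∫ t in (0:ℝ)..ξ ^ k, h t := by
  have himage : (· ^ k) '' Ioc 0 ξ = Ioc 0 (ξ ^ k) := by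
    ext t
    constructor
    · rintro ⟨η, hη, rfl⟩
      exact ⟨rpow_pos_of_pos hη.1 k, rpow_le_rpow hη.1.le hη.2 hk.le⟩
    · rintro ⟨ht0, htξ⟩
      refine ⟨t ^ k⁻¹, ⟨rpow_pos_of_pos ht0 _, ?_⟩, rpow_inv_rpow ht0.le hk.ne'⟩
      exact (rpow_inv_le_iff_of_pos ht0.le hξ hk).2 htξ
  rw [intervalIntegral.integral_of_le hξ, intervalIntegral.integral_of_le (by positivity),
    ← himage, integral_image_eq_integral_abs_deriv_smul measurableSet_Ioc
      (fun η hη => (hasDerivAt_rpow_const (Or.inl hη.1.ne')).hasDerivWithinAt)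
      ((rpow_left_injOn hk.ne').mono fun η hη => le_of_lt hη.1)]
  refine setIntegral_congr_fun measurableSet_Ioc fun η hη => ?_
  rw [abs_of_pos (mul_pos hk (rpow_pos_of_pos hη.1 _))]

theorem integral_sub_rpow_mul_rpow_mul_deriv {k s₁ s₂ ξ : ℝ} (hk : 0 < k) (hs₁ : 0 < s₁)
    (hs₂ : 0 < s₂) (hξ : 0 < ξ) :
    ∫ η in (0:ℝ)..ξ, (ξ ^ k - η ^ k) ^ (s₁ / k - 1) * η ^ (s₂ - k) * (k * η ^ (k - 1))
      = ξ ^ (s₁ + s₂ - k) * ProbabilityTheory.beta (s₂ / k) (s₁ / k) := by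
  calc ∫ η in (0:ℝ)..ξ, (ξ ^ k - η ^ k) ^ (s₁ / k - 1) * η ^ (s₂ - k) * (k * η ^ (k - 1))
      = ∫ η in (0:ℝ)..ξ,
          (k * η ^ (k - 1)) • ((η ^ k) ^ (s₂ / k - 1) * (ξ ^ k - η ^ k) ^ (s₁ / k - 1)) := by
        refine intervalIntegral.integral_congr fun η hη => ?_
        rw [uIcc_of_le hξ.le] at hη
        rw [smul_eq_mul, ← rpow_mul hη.1, mul_sub, mul_div_cancel₀ _ hk.ne', mul_one]
        ring
    _ = ∫ t in (0:ℝ)..ξ ^ k, t ^ (s₂ / k - 1) * (ξ ^ k - t) ^ (s₁ / k - 1) :=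
        intervalIntegral_comp_rpow (fun t => t ^ (s₂ / k - 1) * (ξ ^ k - t) ^ (s₁ / k - 1))
          hk hξ.le
    _ = (ξ ^ k) ^ (s₂ / k + s₁ / k - 1) * ProbabilityTheory.beta (s₂ / k) (s₁ / k) :=
        integral_rpow_mul_sub_rpow (div_pos hs₂ hk) (div_pos hs₁ hk) (rpow_pos_of_pos hξ k)
    _ = ξ ^ (s₁ + s₂ - k) * ProbabilityTheory.beta (s₂ / k) (s₁ / k) := by
        rw [← rpow_mul hξ.le]
        congr 2
        field_simp
        ring

theorem abs_mul_comp_sub_rpow_le {f g : ℝ → ℝ} {k s₁ s₂ c A B R ξ η : ℝ} (hk : 0 < k)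
    (hf : ∀ x ∈ Ioc (0:ℝ) R, |f x| ≤ A * x ^ (s₁ - k) * exp (c * x ^ k))
    (hg : ∀ x ∈ Ioc (0:ℝ) R, |g x| ≤ B * x ^ (s₂ - k) * exp (c * x ^ k))
    (hη : 0 < η) (hηξ : η < ξ) (hξR : ξ ≤ R) :
    |f ((ξ ^ k - η ^ k) ^ (1 / k)) * g η * (k * η ^ (k - 1))|
      ≤ A * B * exp (c * ξ ^ k) *
          ((ξ ^ k - η ^ k) ^ (s₁ / k - 1) * η ^ (s₂ - k) * (k * η ^ (k - 1))) := by
  set x := (ξ ^ k - η ^ k) ^ (1 / k)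
  have hu : 0 < ξ ^ k - η ^ k := sub_pos.2 (rpow_lt_rpow hη.le hηξ hk)
  have hx : 0 < x := rpow_pos_of_pos hu _
  have hxk : x ^ k = ξ ^ k - η ^ k := by
    rw [← rpow_mul hu.le, one_div_mul_cancel hk.ne', rpow_one]
  have hxξ : x ≤ ξ := by
    refine (rpow_le_rpow_iff hx.le (hη.trans hηξ).le hk).1 ?_
    rw [hxk]
    exact sub_le_self _ (rpow_nonneg hη.le k)
  have hxpow : x ^ (s₁ - k) = (ξ ^ k - η ^ k) ^ (s₁ / k - 1) := by
    rw [← rpow_mul hu.le]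
    congr 1
    field_simp
  have hexp : exp (c * x ^ k) * exp (c * η ^ k) = exp (c * ξ ^ k) := by
    rw [hxk, ← exp_add, ← mul_add, sub_add_cancel]
  have hfx := hf x ⟨hx, hxξ.trans hξR⟩
  have hgη := hg η ⟨hη, hηξ.le.trans hξR⟩
  have hdη : 0 < k * η ^ (k - 1) := mul_pos hk (rpow_pos_of_pos hη _)
  rw [abs_mul, abs_mul, abs_of_pos hdη]
  calc |f x| * |g η| * (k * η ^ (k - 1))
      ≤ (A * x ^ (s₁ - k) * exp (c * x ^ k)) * (B * η ^ (s₂ - k) * exp (c * η ^ k))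
          * (k * η ^ (k - 1)) :=
        mul_le_mul_of_nonneg_right
          (mul_le_mul hfx hgη (abs_nonneg _) ((abs_nonneg _).trans hfx)) hdη.le
    _ = _ := by
        rw [hxpow, ← hexp]
        ring

theorem stmt_1_general (k s₁ s₂ c C₁ C₂ R : ℝ) (hk : 0 < k) (hs₁ : 0 < s₁) (hs₂ : 0 < s₂)
    (f g : ℝ → ℝ)
    (hf : ∀ x ∈ Set.Ioc (0:ℝ) R, |f x| ≤ C₁ * x ^ (s₁ - k) * exp (c * x ^ k) / Gamma (s₁ / k))
    (hg : ∀ x ∈ Set.Ioc (0:ℝ) R, |g x| ≤ C₂ * x ^ (s₂ - k) * exp (c * x ^ k) / Gamma (s₂ / k)) :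
    ∀ ξ ∈ Set.Ioc (0:ℝ) R,
      |∫ η in (0:ℝ)..ξ, f ((ξ ^ k - η ^ k) ^ (1 / k)) * g η * (k * η ^ (k - 1))|
        ≤ C₁ * C₂ * ξ ^ (s₁ + s₂ - k) * exp (c * ξ ^ k) / Gamma ((s₁ + s₂) / k) := by
  rintro ξ ⟨hξ, hξR⟩
  have hkernel := integral_sub_rpow_mul_rpow_mul_deriv hk hs₁ hs₂ hξ
  -- the kernel is integrable because its integral is nonzero (a non-integrable one would give 0)
  have hkernel_int := intervalIntegral.intervalIntegrable_of_integral_ne_zero (hkernel.trans_ne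
    (mul_pos (rpow_pos_of_pos hξ _)
      (ProbabilityTheory.beta_pos (div_pos hs₂ hk) (div_pos hs₁ hk))).ne')
  set K := C₁ / Gamma (s₁ / k) * (C₂ / Gamma (s₂ / k)) * exp (c * ξ ^ k) with hK
  have hbound : ∀ᵐ η, η ∈ Ioc 0 ξ →
      ‖f ((ξ ^ k - η ^ k) ^ (1 / k)) * g η * (k * η ^ (k - 1))‖
        ≤ K * ((ξ ^ k - η ^ k) ^ (s₁ / k - 1) * η ^ (s₂ - k) * (k * η ^ (k - 1))) := by
    filter_upwards [Measure.ae_ne volume ξ] with η hne hη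
    exact abs_mul_comp_sub_rpow_le hk (fun x hx => (hf x hx).trans_eq (by ring))
      (fun x hx => (hg x hx).trans_eq (by ring)) hη.1 (hη.2.lt_of_ne hne) hξR
  calc _ ≤ ∫ η in (0:ℝ)..ξ,
          K * ((ξ ^ k - η ^ k) ^ (s₁ / k - 1) * η ^ (s₂ - k) * (k * η ^ (k - 1))) :=
        intervalIntegral.norm_integral_le_of_norm_le hξ.le hbound (hkernel_int.const_mul K)
    _ = _ := by
        rw [intervalIntegral.integral_const_mul, hkernel, hK, ProbabilityTheory.beta,
          ← add_div, add_comm s₂]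
        have := Gamma_pos_of_pos (div_pos hs₁ hk)
        have := Gamma_pos_of_pos (div_pos hs₂ hk)
        field_simp

theorem stmt_1 (k s₁ s₂ c C₁ C₂ R : ℝ) (hk : 0 < k) (hs₁ : 0 < s₁) (hs₂ : 0 < s₂)
    (hc : 0 ≤ c) (hR : 0 < R) (f g : ℝ → ℝ)
    (hf : ∀ x ∈ Set.Ioc (0:ℝ) R, |f x| ≤ C₁ * x ^ (s₁ - k) * exp (c * x ^ k) / Gamma (s₁ / k))
    (hg : ∀ x ∈ Set.Ioc (0:ℝ) R, |g x| ≤ C₂ * x ^ (s₂ - k) * exp (c * x ^ k) / Gamma (s₂ / k)) :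
    ∀ ξ ∈ Set.Ioc (0:ℝ) R,
      |∫ η in (0:ℝ)..ξ, f ((ξ ^ k - η ^ k) ^ (1 / k)) * g η * (k * η ^ (k - 1))|
        ≤ C₁ * C₂ * ξ ^ (s₁ + s₂ - k) * exp (c * ξ ^ k) / Gamma ((s₁ + s₂) / k) :=
  stmt_1_general k s₁ s₂ c C₁ C₂ R hk hs₁ hs₂ f g hf hg
end

section
/- There exists a constant C₁ > 0 such that for every n ≥ 0, Σ_{k+ℓ=n} 1/((k+2)²(ℓ+2)²) ≤ C₁/(n+4)². -/
/-!
Write `a = k + 2`, `b = ℓ + 2`, so that `a + b = n + 4`. From `(a + b)² ≤ 2 (a² + b²)` we get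
`1 / (a² b²) ≤ 2 / (a + b)² · (1 / a² + 1 / b²)`, and summing over the antidiagonal leaves twice
the partial sum of `∑ 1 / (k + 2)² ≤ 1`; hence `C₁ = 4` works.
-/

open Finset

theorem one_div_sq_mul_sq_le {K : Type*} [Field K] [LinearOrder K] [IsStrictOrderedRing K]
    {a b : K} (ha : 0 < a) (hb : 0 < b) :
    1 / (a ^ 2 * b ^ 2) ≤ 2 / (a + b) ^ 2 * (1 / a ^ 2 + 1 / b ^ 2) := by
  rw [div_add_div _ _ (by positivity) (by positivity), div_mul_div_comm,
    div_le_div_iff₀ (by positivity) (by positivity)]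
  have hsq : (a + b) ^ 2 ≤ 2 * (a ^ 2 + b ^ 2) := by nlinarith [sq_nonneg (a - b)]
  have hab : 0 ≤ a ^ 2 * b ^ 2 := by positivity
  calc 1 * ((a + b) ^ 2 * (a ^ 2 * b ^ 2)) ≤ 2 * (a ^ 2 + b ^ 2) * (a ^ 2 * b ^ 2) := by
        rw [one_mul]; exact mul_le_mul_of_nonneg_right hsq hab
    _ = 2 * (1 * b ^ 2 + a ^ 2 * 1) * (a ^ 2 * b ^ 2) := by ring

theorem sum_range_one_div_add_two_sq_le_one (m : ℕ) :
    ∑ k ∈ range m, (1 : ℝ) / ((k : ℝ) + 2) ^ 2 ≤ 1 := by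
  have h := sum_Ioo_inv_sq_le (α := ℝ) 1 (m + 2)
  rw [← Ico_add_one_left_eq_Ioo, show 1 + 1 = 0 + 2 from rfl, ← sum_Ico_add',
    ← range_eq_Ico] at h
  norm_num at h
  simpa only [one_div] using h

theorem stmt_7 :
    ∃ C₁ > (0:ℝ), ∀ n : ℕ,
      ∑ p ∈ Finset.HasAntidiagonal.antidiagonal n, (1:ℝ) / ((p.1 + 2) ^ 2 * (p.2 + 2) ^ 2)
        ≤ C₁ / (n + 4) ^ 2 := by
  refine ⟨4, by norm_num, fun n => ?_⟩
  set f : ℕ → ℝ := fun k => 1 / ((k : ℝ) + 2) ^ 2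
  have hpointwise : ∀ p ∈ antidiagonal n,
      (1:ℝ) / ((p.1 + 2) ^ 2 * (p.2 + 2) ^ 2) ≤ 2 / ((n : ℝ) + 4) ^ 2 * (f p.1 + f p.2) := by
    intro p hp
    have hsum : (n : ℝ) + 4 = (p.1 + 2) + (p.2 + 2) := by
      rw [← mem_antidiagonal.mp hp]; push_cast; ring
    rw [hsum]
    exact one_div_sq_mul_sq_le (by positivity) (by positivity)
  have hswap : ∑ p ∈ antidiagonal n, f p.2 = ∑ p ∈ antidiagonal n, f p.1 :=
    Nat.sum_antidiagonal_swap (f := fun p => f p.1)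
  have hpartial : ∑ p ∈ antidiagonal n, f p.1 ≤ 1 := by
    rw [Nat.sum_antidiagonal_eq_sum_range_succ_mk]
    exact sum_range_one_div_add_two_sq_le_one (n + 1)
  calc _ ≤ ∑ p ∈ antidiagonal n, 2 / ((n : ℝ) + 4) ^ 2 * (f p.1 + f p.2) := sum_le_sum hpointwise
    _ = 2 / ((n : ℝ) + 4) ^ 2 * (2 * ∑ p ∈ antidiagonal n, f p.1) := by
        rw [← mul_sum, sum_add_distrib, hswap, two_mul]
    _ ≤ 2 / ((n : ℝ) + 4) ^ 2 * 2 := by gcongr; linarith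
    _ = 4 / ((n : ℝ) + 4) ^ 2 := by ring
end

section
/- There exists a constant c > 0 such that the formal power series θ(τ) = Σ_{n=0}^∞ c τⁿ/(n+1)³ and its formal derivative θ'(τ) satisfy θ'(τ)·θ'(τ) ≪ θ'(τ) coefficientwise. -/
/-!
The coefficients of `θ'` are `c aₖ` with `aₖ = (k+1)/(k+2)³ ≤ (k+2)⁻²`, so the `n`-th coefficient
of `θ'²` is at most `c² ∑_{i+j=n} x⁻² y⁻²` with `x = i+2`, `y = j+2`, `x + y = n+4`.
Since `(xy)⁻¹ = (x⁻¹ + y⁻¹)/(x+y)` and `(u+v)² ≤ 2(u²+v²)`, each term is at most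
`2 (x⁻² + y⁻²)/(n+4)²`, and `∑_{k ≥ 2} k⁻² ≤ 1` bounds the sum by `4/(n+4)²`.
For `c = 1/4` this is at most `c aₙ`, because `(n+2)³ ≤ (n+1)(n+4)²`.
-/

open PowerSeries Finset

lemma sum_range_inv_add_two_sq_le_one (n : ℕ) : ∑ i ∈ range n, (((i : ℝ) + 2) ^ 2)⁻¹ ≤ 1 := by
  have hshift : ∑ i ∈ range n, (((i : ℝ) + 2) ^ 2)⁻¹ = ∑ i ∈ Ioo 1 (n + 2), ((i : ℝ) ^ 2)⁻¹ := by
    rw [range_eq_Ico, ← Finset.Ico_add_one_left_eq_Ioo]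
    exact_mod_cast sum_Ico_add' (fun i : ℕ => ((i : ℝ) ^ 2)⁻¹) 0 n 2
  rw [hshift]
  exact (sum_Ioo_inv_sq_le 1 (n + 2)).trans_eq (by norm_num)

lemma inv_sq_mul_sq_le {x y : ℝ} (hx : 0 < x) (hy : 0 < y) :
    (x ^ 2 * y ^ 2)⁻¹ ≤ 2 / (x + y) ^ 2 * ((x ^ 2)⁻¹ + (y ^ 2)⁻¹) := by
  have hxy : (x * y)⁻¹ = (x⁻¹ + y⁻¹) / (x + y) := by field_simp; ring
  calc (x ^ 2 * y ^ 2)⁻¹ = ((x⁻¹ + y⁻¹) / (x + y)) ^ 2 := by rw [← hxy]; ring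
    _ ≤ 2 / (x + y) ^ 2 * ((x ^ 2)⁻¹ + (y ^ 2)⁻¹) := by
      rw [div_pow, div_mul_eq_mul_div, ← inv_pow, ← inv_pow]
      gcongr
      nlinarith [sq_nonneg (x⁻¹ - y⁻¹)]

lemma sum_antidiagonal_inv_sq_mul_sq_le (n : ℕ) :
    ∑ p ∈ antidiagonal n, ((((p.1 : ℝ) + 2) ^ 2 * ((p.2 : ℝ) + 2) ^ 2))⁻¹ ≤ 4 / ((n : ℝ) + 4) ^ 2 := by
  have hsym : ∑ p ∈ antidiagonal n, ((((p.1 : ℝ) + 2) ^ 2)⁻¹ + (((p.2 : ℝ) + 2) ^ 2)⁻¹)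
      = 2 * ∑ i ∈ range (n + 1), (((i : ℝ) + 2) ^ 2)⁻¹ := by
    rw [sum_add_distrib, ← Nat.sum_antidiagonal_swap (f := fun p => (((p.2 : ℝ) + 2) ^ 2)⁻¹)]
    simp only [Prod.snd_swap, ← two_mul]
    rw [Nat.sum_antidiagonal_eq_sum_range_succ (fun i _ => (((i : ℝ) + 2) ^ 2)⁻¹)]
  calc ∑ p ∈ antidiagonal n, ((((p.1 : ℝ) + 2) ^ 2 * ((p.2 : ℝ) + 2) ^ 2))⁻¹
      ≤ ∑ p ∈ antidiagonal n,
          2 / ((n : ℝ) + 4) ^ 2 * ((((p.1 : ℝ) + 2) ^ 2)⁻¹ + (((p.2 : ℝ) + 2) ^ 2)⁻¹) := by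
        refine sum_le_sum fun p hp => ?_
        have hsum : ((p.1 : ℝ) + 2) + ((p.2 : ℝ) + 2) = n + 4 := by
          rw [← mem_antidiagonal.mp hp]; push_cast; ring
        simpa only [hsum] using inv_sq_mul_sq_le (x := (p.1 : ℝ) + 2) (y := (p.2 : ℝ) + 2)
          (by positivity) (by positivity)
    _ = 2 / ((n : ℝ) + 4) ^ 2 * (2 * ∑ i ∈ range (n + 1), (((i : ℝ) + 2) ^ 2)⁻¹) := by
        rw [← mul_sum, hsym]
    _ ≤ 2 / ((n : ℝ) + 4) ^ 2 * (2 * 1) := by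
        gcongr; exact sum_range_inv_add_two_sq_le_one _
    _ = 4 / ((n : ℝ) + 4) ^ 2 := by ring

lemma coeff_derivativeFun_mk_div_cube (c : ℝ) (n : ℕ) :
    coeff n (derivativeFun (mk fun m : ℕ => c / (m + 1) ^ 3)) = c * ((n + 1) / (n + 2) ^ 3) := by
  change coeff n (derivative ℝ _) = _
  rw [coeff_derivative, coeff_mk]
  push_cast
  ring

lemma add_one_div_add_two_cube_le (k : ℕ) :
    ((k : ℝ) + 1) / (k + 2) ^ 3 ≤ (((k : ℝ) + 2) ^ 2)⁻¹ := by
  calc ((k : ℝ) + 1) / (k + 2) ^ 3 ≤ ((k : ℝ) + 2) / (k + 2) ^ 3 := by gcongr; linarith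
    _ = (((k : ℝ) + 2) ^ 2)⁻¹ := by field_simp

theorem stmt_9 :
    ∃ c > (0:ℝ),
      ∀ n : ℕ,
        (coeff n) (derivativeFun (PowerSeries.mk (fun m : ℕ => c / (m + 1) ^ 3)) *
            derivativeFun (PowerSeries.mk (fun m : ℕ => c / (m + 1) ^ 3)))
          ≤ (coeff n) (derivativeFun (PowerSeries.mk (fun m : ℕ => c / (m + 1) ^ 3))) := by
  refine ⟨1 / 4, by norm_num, fun n => ?_⟩
  simp only [coeff_mul, coeff_derivativeFun_mk_div_cube]
  calc ∑ p ∈ antidiagonal n,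
        1 / 4 * (((p.1 : ℝ) + 1) / (p.1 + 2) ^ 3) * (1 / 4 * ((p.2 + 1) / (p.2 + 2) ^ 3))
      ≤ ∑ p ∈ antidiagonal n, (1 / 4) ^ 2 * ((((p.1 : ℝ) + 2) ^ 2 * ((p.2 : ℝ) + 2) ^ 2))⁻¹ := by
        refine sum_le_sum fun p _ => ?_
        rw [mul_inv, mul_mul_mul_comm, ← sq]
        gcongr
        · exact add_one_div_add_two_cube_le p.1
        · exact add_one_div_add_two_cube_le p.2
    _ ≤ (1 / 4) ^ 2 * (4 / ((n : ℝ) + 4) ^ 2) := by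
        rw [← mul_sum]; gcongr; exact sum_antidiagonal_inv_sq_mul_sq_le n
    _ = 1 / 4 * (1 / ((n : ℝ) + 4) ^ 2) := by ring
    _ ≤ 1 / 4 * (((n : ℝ) + 1) / (n + 2) ^ 3) := by
        refine mul_le_mul_of_nonneg_left ?_ (by norm_num)
        rw [div_le_div_iff₀ (by positivity) (by positivity)]
        nlinarith [sq_nonneg (n : ℝ), (n.cast_nonneg : (0 : ℝ) ≤ n)]
end

section
/- Let R > 0, c > 0 and set Θ(τ) := θ(τ/R) where θ(τ) = Σ_{n=0}^∞ c τⁿ/(n+1)³. Then there exists B > 0 such that for every ℓ ∈ ℕ, Θ(τ) ≪ (B^ℓ/ℓ!) Θ^{(ℓ)}(τ) as formal power series (coefficientwise inequality), where Θ^{(ℓ)} denotes the ℓ-th formal derivative. -/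
/-!
The `n`-th coefficient of `Θ^{(ℓ)} / ℓ!` is `C(n + ℓ, ℓ) c / w (n + ℓ)` with `w m = R ^ m (m + 1) ^ 3`.
Since `C(n + ℓ, ℓ) ≥ 1` and `w` is submultiplicative, `w (n + ℓ) ≤ w n · w ℓ`, it suffices to take
`B` with `w ℓ ≤ B ^ ℓ` for all `ℓ`, e.g. `B = 8 max R 1`.
-/

open PowerSeries

theorem succ_pow_le_pow_pow (k ℓ : ℕ) : ((ℓ : ℝ) + 1) ^ k ≤ ((2 : ℝ) ^ k) ^ ℓ := by
  rw [← pow_mul, mul_comm, pow_mul]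
  gcongr
  exact_mod_cast Nat.lt_two_pow_self

theorem exists_pow_mul_succ_pow_le {R : ℝ} (hR : 0 ≤ R) (k : ℕ) :
    ∃ B > (0 : ℝ), ∀ ℓ : ℕ, R ^ ℓ * ((ℓ : ℝ) + 1) ^ k ≤ B ^ ℓ := by
  refine ⟨max R 1 * 2 ^ k, by positivity, fun ℓ => ?_⟩
  rw [mul_pow]
  gcongr
  · exact le_max_left R 1
  · exact succ_pow_le_pow_pow k ℓ

theorem pow_mul_succ_pow_three_add_le {R : ℝ} (hR : 0 ≤ R) (n ℓ : ℕ) :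
    R ^ (n + ℓ) * (((n + ℓ : ℕ) : ℝ) + 1) ^ 3 ≤
      R ^ n * ((n : ℝ) + 1) ^ 3 * (R ^ ℓ * ((ℓ : ℝ) + 1) ^ 3) := by
  have hsucc : ((n + ℓ : ℕ) : ℝ) + 1 ≤ ((n : ℝ) + 1) * ((ℓ : ℝ) + 1) := by
    push_cast
    nlinarith [(n.cast_nonneg : (0 : ℝ) ≤ n), (ℓ.cast_nonneg : (0 : ℝ) ≤ ℓ)]
  calc R ^ (n + ℓ) * (((n + ℓ : ℕ) : ℝ) + 1) ^ 3
      ≤ R ^ (n + ℓ) * (((n : ℝ) + 1) * ((ℓ : ℝ) + 1)) ^ 3 := by gcongr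
    _ = R ^ n * ((n : ℝ) + 1) ^ 3 * (R ^ ℓ * ((ℓ : ℝ) + 1) ^ 3) := by ring

theorem div_pow_mul_succ_pow_three_le {R B c : ℝ} (hR : 0 < R) (hc : 0 ≤ c) {ℓ : ℕ}
    (hB : R ^ ℓ * ((ℓ : ℝ) + 1) ^ 3 ≤ B ^ ℓ) (n : ℕ) :
    c / (R ^ n * ((n : ℝ) + 1) ^ 3) ≤
      B ^ ℓ * (c / (R ^ (n + ℓ) * (((n + ℓ : ℕ) : ℝ) + 1) ^ 3)) := by
  have hw : 0 < R ^ n * ((n : ℝ) + 1) ^ 3 := by positivity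
  have hB₀ : 0 < B ^ ℓ := lt_of_lt_of_le (by positivity) hB
  calc c / (R ^ n * ((n : ℝ) + 1) ^ 3)
      = B ^ ℓ * c / (R ^ n * ((n : ℝ) + 1) ^ 3 * B ^ ℓ) := by field_simp
    _ ≤ B ^ ℓ * c / (R ^ (n + ℓ) * (((n + ℓ : ℕ) : ℝ) + 1) ^ 3) := by
        refine div_le_div_of_nonneg_left (by positivity) (by positivity) ?_
        calc R ^ (n + ℓ) * (((n + ℓ : ℕ) : ℝ) + 1) ^ 3
            ≤ R ^ n * ((n : ℝ) + 1) ^ 3 * (R ^ ℓ * ((ℓ : ℝ) + 1) ^ 3) :=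
              pow_mul_succ_pow_three_add_le hR.le n ℓ
          _ ≤ R ^ n * ((n : ℝ) + 1) ^ 3 * B ^ ℓ := by gcongr
    _ = B ^ ℓ * (c / (R ^ (n + ℓ) * (((n + ℓ : ℕ) : ℝ) + 1) ^ 3)) := mul_div_assoc _ _ _

theorem le_div_factorial_mul_ascFactorial_mul {x y : ℝ} (hx : 0 ≤ x) (hy : 0 ≤ y) (n ℓ : ℕ) :
    x * y ≤ x / ℓ.factorial * ((n + 1).ascFactorial ℓ * y) := by
  have hchoose : (1 : ℝ) ≤ (n + ℓ).choose ℓ := by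
    exact_mod_cast Nat.choose_pos (Nat.le_add_left ℓ n)
  rw [Nat.ascFactorial_eq_factorial_mul_choose, Nat.cast_mul]
  calc x * y ≤ x * y * (n + ℓ).choose ℓ := le_mul_of_one_le_right (by positivity) hchoose
    _ = x / ℓ.factorial * (ℓ.factorial * (n + ℓ).choose ℓ * y) := by
        field_simp

set_option linter.deprecated false in
theorem stmt_10 (R c : ℝ) (hR : 0 < R) (hc : 0 < c) :
    ∃ B > (0:ℝ), ∀ ℓ n : ℕ,
      (coeff n) (PowerSeries.mk (fun m : ℕ => c / (R ^ m * (m + 1) ^ 3)))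
        ≤ B ^ ℓ / (Nat.factorial ℓ) *
          (coeff n) (derivativeFun^[ℓ]
            (PowerSeries.mk (fun m : ℕ => c / (R ^ m * (m + 1) ^ 3)))) := by
  obtain ⟨B, hB₀, hB⟩ := exists_pow_mul_succ_pow_le hR.le 3
  refine ⟨B, hB₀, fun ℓ n => ?_⟩
  change _ ≤ _ * coeff n ((d⁄dX ℝ)^[ℓ] _)
  rw [coeff_iterate_derivative, coeff_mk, coeff_mk]
  calc c / (R ^ n * ((n : ℝ) + 1) ^ 3)
      ≤ B ^ ℓ * (c / (R ^ (n + ℓ) * (((n + ℓ : ℕ) : ℝ) + 1) ^ 3)) :=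
        div_pow_mul_succ_pow_three_le hR hc.le (hB ℓ) n
    _ ≤ _ := le_div_factorial_mul_ascFactorial_mul (by positivity) (by positivity) n ℓ
end

section
/- Let θ be a formal power series with nonnegative coefficients satisfying θ'·θ' ≪ θ' (with θ' the formal derivative), and let Θ(τ) = θ(τ/R) for R > 0. Then for every n ≥ 1 and ℓ ≥ 0, Σ_{ℓ₁+⋯+ℓₙ=ℓ} (ℓ!/(ℓ₁!⋯ℓₙ!)) Θ^{(ℓ₁+1)}(τ)⋯Θ^{(ℓₙ+1)}(τ) ≪ R^{-n+1} Θ^{(ℓ+1)}(τ). -/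
open PowerSeries Finset

/-! By the multinomial Leibniz rule the left-hand side is the `ℓ`-th derivative of `(Θ')ⁿ`.
Rescaling turns `θ'θ' ≪ θ'` into `Θ'Θ' ≪ R⁻¹ Θ'`; since multiplying by a series with
nonnegative coefficients preserves `≪`, induction gives `(Θ')ⁿ ≪ R^{1-n} Θ'`. Finally,
differentiation preserves `≪`, as it multiplies each coefficient by a positive integer. -/

theorem Finset.Nat.sum_antidiagonalTuple_succ {M : Type*} [AddCommMonoid M] (k n : ℕ)
    (g : (Fin (k + 1) → ℕ) → M) :
    ∑ f ∈ antidiagonalTuple (k + 1) n, g f =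
      ∑ p ∈ antidiagonal n, ∑ f ∈ antidiagonalTuple k p.2, g (Fin.cons p.1 f) := by
  rw [Finset.sum_sigma']
  refine Finset.sum_nbij' (fun f => ⟨(f 0, ∑ i, Fin.tail f i), Fin.tail f⟩)
    (fun x => Fin.cons x.1.1 x.2) ?_ ?_ (fun f _ => Fin.cons_self_tail f) ?_ ?_
  · intro f hf
    simp_all [Nat.mem_antidiagonalTuple, Fin.sum_univ_succ, Fin.tail]
  · rintro ⟨⟨a, b⟩, f⟩ hx
    simp_all [Nat.mem_antidiagonalTuple, Fin.sum_univ_succ]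
  · rintro ⟨⟨a, b⟩, f⟩ hx
    simp_all [Nat.mem_antidiagonalTuple]
  · intro f _
    rw [Fin.cons_self_tail]

theorem Nat.multinomial_univ_fin_cons {k : ℕ} (a : ℕ) (f : Fin k → ℕ) :
    Nat.multinomial univ (Fin.cons a f : Fin (k + 1) → ℕ) =
      (a + ∑ i, f i).choose a * Nat.multinomial univ f := by
  rw [Fin.univ_succ, Nat.multinomial_cons]
  simp [Nat.multinomial, Finset.sum_map, Finset.prod_map]

namespace Derivation

variable {R A : Type*} [CommSemiring R] [CommSemiring A] [Algebra R A] (D : Derivation R A A)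

theorem iterate_map_mul (n : ℕ) (a b : A) :
    D^[n] (a * b) = ∑ ij ∈ antidiagonal n, n.choose ij.1 • (D^[ij.1] a * D^[ij.2] b) := by
  induction n with
  | zero => simp
  | succ n ih =>
    rw [sum_antidiagonal_choose_succ_nsmul (fun i j => D^[i] a * D^[j] b) n]
    simp only [Function.iterate_succ_apply', ih, map_sum, map_nsmul, Derivation.leibniz,
      smul_eq_mul, smul_add, sum_add_distrib]
    congr 1
    refine sum_congr rfl fun ⟨i, j⟩ hij => ?_
    rw [n.choose_symm_of_eq_add (mem_antidiagonal.1 hij).symm]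
    ring

theorem iterate_map_prod {k : ℕ} (a : Fin k → A) (n : ℕ) :
    D^[n] (∏ i, a i) =
      ∑ f ∈ Nat.antidiagonalTuple k n, Nat.multinomial univ f • ∏ i, D^[f i] (a i) := by
  induction k generalizing n with
  | zero =>
    cases n with
    | zero => simp
    | succ n => simp [Function.iterate_succ_apply]
  | succ k ih =>
    rw [Fin.prod_univ_succ, D.iterate_map_mul, Nat.sum_antidiagonalTuple_succ]
    refine sum_congr rfl fun p hp => ?_
    rw [ih, mul_sum, smul_sum]
    refine sum_congr rfl fun f hf => ?_
    rw [Nat.mem_antidiagonalTuple] at hf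
    rw [Nat.multinomial_univ_fin_cons, hf, mem_antidiagonal.1 hp, Fin.prod_univ_succ, mul_smul,
      mul_smul_comm]
    simp only [Fin.cons_zero, Fin.cons_succ]

theorem iterate_map_smul (n : ℕ) (r : R) (a : A) : D^[n] (r • a) = r • D^[n] a := by
  induction n with
  | zero => rfl
  | succ n ih => rw [Function.iterate_succ_apply', ih, D.map_smul, Function.iterate_succ_apply']

end Derivation

namespace PowerSeries

theorem derivative_rescale {R : Type*} [CommSemiring R] (a : R) (f : R⟦X⟧) :
    d⁄dX R (rescale a f) = a • rescale a (d⁄dX R f) := by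
  ext m
  simp only [coeff_derivative, coeff_rescale, coeff_smul, smul_eq_mul, pow_succ]
  ring

variable {R : Type*} [CommSemiring R] [PartialOrder R]

def CoeffLE (f g : R⟦X⟧) : Prop := ∀ m, coeff m f ≤ coeff m g

local infix:50 " ≪ " => CoeffLE

theorem CoeffLE.refl (f : R⟦X⟧) : f ≪ f := fun _ => le_rfl

variable [IsOrderedRing R]

theorem CoeffLE.mul_left {f g h : R⟦X⟧} (hgh : g ≪ h) (hf : ∀ m, 0 ≤ coeff m f) :
    f * g ≪ f * h := fun m => by
  simp only [coeff_mul]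
  exact sum_le_sum fun p _ => mul_le_mul_of_nonneg_left (hgh p.2) (hf p.1)

theorem CoeffLE.smul {f g : R⟦X⟧} (hfg : f ≪ g) {c : R} (hc : 0 ≤ c) : c • f ≪ c • g :=
  fun m => by simpa only [coeff_smul, smul_eq_mul] using mul_le_mul_of_nonneg_left (hfg m) hc

theorem CoeffLE.iterate_derivative {f g : R⟦X⟧} (hfg : f ≪ g) (k : ℕ) :
    (d⁄dX R)^[k] f ≪ (d⁄dX R)^[k] g := fun m => by
  simp only [coeff_iterate_derivative]
  exact mul_le_mul_of_nonneg_left (hfg _) (Nat.cast_nonneg _)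

theorem coeff_derivative_nonneg {f : R⟦X⟧} (hf : ∀ m, 0 ≤ coeff m f) (m : ℕ) :
    0 ≤ coeff m (d⁄dX R f) := by
  rw [coeff_derivative]
  exact mul_nonneg (hf _) (add_nonneg (Nat.cast_nonneg m) zero_le_one)

theorem coeff_rescale_nonneg {f : R⟦X⟧} {a : R} (ha : 0 ≤ a) (hf : ∀ m, 0 ≤ coeff m f) (m : ℕ) :
    0 ≤ coeff m (rescale a f) := by
  rw [coeff_rescale]
  exact mul_nonneg (pow_nonneg ha m) (hf m)

theorem derivative_rescale_mul_self_coeffLE {f : R⟦X⟧} {a : R} (ha : 0 ≤ a)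
    (hf : d⁄dX R f * d⁄dX R f ≪ d⁄dX R f) :
    d⁄dX R (rescale a f) * d⁄dX R (rescale a f) ≪ a • d⁄dX R (rescale a f) := by
  rw [derivative_rescale, smul_mul_smul, ← map_mul, smul_smul]
  refine CoeffLE.smul (fun m => ?_) (mul_nonneg ha ha)
  simpa only [coeff_rescale] using mul_le_mul_of_nonneg_left (hf m) (pow_nonneg ha m)

theorem pow_succ_coeffLE_smul_of_mul_self {f : R⟦X⟧} {c : R} (hf : ∀ m, 0 ≤ coeff m f)
    (hc : 0 ≤ c) (hff : f * f ≪ c • f) (n : ℕ) : f ^ (n + 1) ≪ c ^ n • f := by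
  induction n with
  | zero => simpa only [zero_add, pow_one, pow_zero, one_smul] using CoeffLE.refl f
  | succ n ih =>
    intro m
    calc coeff m (f ^ (n + 2)) ≤ coeff m (f * c ^ n • f) := by
          rw [pow_succ']
          exact ih.mul_left hf m
      _ = coeff m (c ^ n • (f * f)) := by rw [mul_smul_comm]
      _ ≤ coeff m (c ^ n • c • f) := hff.smul (pow_nonneg hc n) m
      _ = coeff m (c ^ (n + 1) • f) := by rw [smul_smul, pow_succ]

end PowerSeries

theorem stmt_12 (θ : PowerSeries ℝ) (hpos : ∀ m : ℕ, 0 ≤ coeff m θ)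
    (hθθ : ∀ m : ℕ, coeff m (derivativeFun θ * derivativeFun θ) ≤ coeff m (derivativeFun θ))
    (R : ℝ) (hR : 0 < R) (Θ : PowerSeries ℝ) (hΘ : Θ = rescale R⁻¹ θ) :
    ∀ n : ℕ, 1 ≤ n → ∀ ℓ m : ℕ,
      coeff m (∑ f ∈ Finset.Nat.antidiagonalTuple n ℓ,
          (Nat.multinomial Finset.univ f : ℝ) • ∏ i : Fin n, derivativeFun^[f i + 1] Θ)
        ≤ R ^ (-(n:ℝ) + 1) * coeff m (derivativeFun^[ℓ + 1] Θ) := by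
  rintro n hn ℓ
  obtain ⟨k, rfl⟩ := Nat.exists_eq_add_of_le' hn
  have hD : derivativeFun = ⇑(d⁄dX ℝ) := rfl
  simp only [hD]
  have ha : 0 ≤ R⁻¹ := inv_nonneg.2 hR.le
  have hΘ' : ∀ m, 0 ≤ coeff m (d⁄dX ℝ Θ) :=
    hΘ ▸ coeff_derivative_nonneg (coeff_rescale_nonneg ha hpos)
  have hsq : CoeffLE (d⁄dX ℝ Θ * d⁄dX ℝ Θ) (R⁻¹ • d⁄dX ℝ Θ) := by
    rw [hΘ]
    exact derivative_rescale_mul_self_coeffLE ha hθθ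
  have hsum : ∑ f ∈ Nat.antidiagonalTuple (k + 1) ℓ, (Nat.multinomial univ f : ℝ) •
      ∏ i, (d⁄dX ℝ)^[f i + 1] Θ = (d⁄dX ℝ)^[ℓ] (d⁄dX ℝ Θ ^ (k + 1)) := by
    rw [← Fin.prod_const, Derivation.iterate_map_prod]
    simp only [Nat.cast_smul_eq_nsmul, Function.iterate_succ_apply]
  have hexp : R ^ (-((k + 1 : ℕ) : ℝ) + 1) = R⁻¹ ^ k := by
    rw [Nat.cast_succ, neg_add, neg_add_cancel_right, Real.rpow_neg hR.le, Real.rpow_natCast,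
      inv_pow]
  intro m
  rw [hsum, hexp, Function.iterate_succ_apply, ← smul_eq_mul, ← coeff_smul,
    ← Derivation.iterate_map_smul]
  exact (pow_succ_coeffLE_smul_of_mul_self hΘ' ha hsq k).iterate_derivative ℓ m
end

section
/- Let k > 0, A > 0, C > 0, c > 0. Then there exist constants M > 0 and c' > c such that for all ξ > 0: Σ_{ℓ=1}^∞ A C^ℓ ξ^{ℓ-k} e^{c ξ^k} / Γ(ℓ/k) ≤ M ξ^{1-k} e^{c' ξ^k}. -/
/-!
Write `s = (ℓ + 1) / k` and `n = ⌈ℓ / k⌉₊`. For `x ≥ 1`, `x ^ ℓ ≤ (x ^ k) ^ n`, and the exponential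
series gives `(e² x ^ k) ^ n ≤ n! · exp (e² x ^ k)`. Since `n + 1 ≤ s + 2`, monotonicity of `Γ` on
`[2, ∞)` and `Γ (s + 2) = (s + 1) s Γ s ≤ e^{2s} Γ s` bound `n!` by `e^{2/k} e^{2n} Γ s`; the factor
`e^{2n}` cancels, so `x ^ ℓ / Γ s ≤ K exp (e² x ^ k)` with `K` independent of `ℓ`. Applied at `x = 2Cξ`, this
makes the `ℓ`-th term of the series at most `(1/2)^ℓ` times `ξ ^ (1 - k) exp (c' ξ ^ k)`.
-/

open Real
open scoped Nat

namespace Real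

theorem one_le_Gamma_of_two_le {s : ℝ} (hs : 2 ≤ s) : 1 ≤ Gamma s := by
  rw [← Gamma_two]
  exact Gamma_strictMonoOn_Ici.monotoneOn Set.self_mem_Ici hs hs

theorem Gamma_add_two {s : ℝ} (hs : 0 < s) : Gamma (s + 2) = (s + 1) * s * Gamma s := by
  rw [show s + 2 = s + 1 + 1 by ring, Gamma_add_one (by positivity), Gamma_add_one hs.ne', mul_assoc]

theorem inv_six_le_Gamma {s : ℝ} (hs : 0 < s) : 6⁻¹ ≤ Gamma s := by
  rcases le_or_gt 2 s with h | h
  · linarith [one_le_Gamma_of_two_le h]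
  · have h1 : 1 ≤ (s + 1) * s * Gamma s := by
      rw [← Gamma_add_two hs]; exact one_le_Gamma_of_two_le (by linarith)
    have h6 : (s + 1) * s < 6 := by nlinarith
    nlinarith [mul_lt_mul_of_pos_right h6 (Gamma_pos_of_pos hs)]

theorem Gamma_add_two_le_exp_mul_Gamma {s : ℝ} (hs : 0 < s) :
    Gamma (s + 2) ≤ exp (2 * s) * Gamma s := by
  have hs1 : s + 1 ≤ exp s := add_one_le_exp s
  have hprod : (s + 1) * s ≤ exp s * exp s := by nlinarith
  rw [Gamma_add_two hs, two_mul, exp_add]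
  exact mul_le_mul_of_nonneg_right hprod (Gamma_pos_of_pos hs).le

theorem factorial_le_exp_mul_Gamma {n : ℕ} {s : ℝ} (hn : 1 ≤ n) (hs : 0 < s) (hns : n ≤ s + 1) :
    (n ! : ℝ) ≤ exp (2 * s) * Gamma s := by
  rw [← Gamma_nat_eq_factorial]
  refine le_trans ?_ (Gamma_add_two_le_exp_mul_Gamma hs)
  have hn2 : (2 : ℝ) ≤ n + 1 := by norm_cast; omega
  exact Gamma_strictMonoOn_Ici.monotoneOn hn2 (Set.mem_Ici.mpr (by linarith)) (by linarith)

end Real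

theorem pow_le_exp_mul_Gamma_mul_exp_of_one_le {k x : ℝ} (hk : 0 < k) (hx : 1 ≤ x) {ℓ : ℕ}
    (hℓ : 1 ≤ ℓ) :
    x ^ ℓ ≤ exp (2 / k) * Gamma ((ℓ + 1) / k) * exp (exp 2 * x ^ k) := by
  set s : ℝ := (ℓ + 1) / k
  set n : ℕ := ⌈(ℓ : ℝ) / k⌉₊
  have hs : 0 < s := by positivity
  have hℓk : (ℓ : ℝ) / k ≤ n := Nat.le_ceil _
  have hn : 1 ≤ n := Nat.one_le_iff_ne_zero.mpr (Nat.ceil_pos.mpr (by positivity)).ne'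
  have hns : (n : ℝ) ≤ s + 1 := by
    have := Nat.ceil_lt_add_one (by positivity : (0 : ℝ) ≤ ℓ / k)
    have : (ℓ : ℝ) / k ≤ s := div_le_div_of_nonneg_right (by linarith) hk.le
    linarith
  have hsn : 2 * s ≤ 2 / k + 2 * n := by
    have : 2 * s = 2 * (ℓ / k) + 2 / k := by simp only [s]; ring
    linarith
  have hpow : x ^ ℓ ≤ (x ^ k) ^ n := by
    rw [← rpow_natCast, ← rpow_natCast, ← rpow_mul (by linarith)]
    exact rpow_le_rpow_of_exponent_le hx (by rwa [div_le_iff₀ hk, mul_comm] at hℓk)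
  have hseries : (exp 2 * x ^ k) ^ n ≤ n ! * exp (exp 2 * x ^ k) := by
    rw [← div_le_iff₀' (by positivity)]
    exact pow_div_factorial_le_exp _ (by positivity) n
  have hcancel : exp (2 * n) * (x ^ k) ^ n ≤
      exp (2 * n) * (exp (2 / k) * Gamma s * exp (exp 2 * x ^ k)) := by
    calc exp (2 * n) * (x ^ k) ^ n = (exp 2 * x ^ k) ^ n := by
          rw [mul_pow, ← exp_nat_mul, mul_comm (n : ℝ)]
      _ ≤ n ! * exp (exp 2 * x ^ k) := hseries
      _ ≤ exp (2 * s) * Gamma s * exp (exp 2 * x ^ k) := by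
          gcongr; exact factorial_le_exp_mul_Gamma hn hs hns
      _ ≤ exp (2 / k + 2 * n) * Gamma s * exp (exp 2 * x ^ k) := by
          gcongr
      _ = _ := by rw [exp_add]; ring
  exact hpow.trans (le_of_mul_le_mul_left hcancel (exp_pos _))

theorem pow_le_Gamma_mul_exp_rpow {k x : ℝ} (hk : 0 < k) (hx : 0 ≤ x) (ℓ : ℕ) :
    x ^ ℓ ≤ 6 * exp (2 / k) * Gamma ((ℓ + 1) / k) * exp (exp 2 * x ^ k) := by
  have hs : 0 < ((ℓ : ℝ) + 1) / k := by positivity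
  have h1 : 1 ≤ exp (2 / k) := one_le_exp (by positivity)
  have h2 : 1 ≤ exp (exp 2 * x ^ k) := one_le_exp (by positivity)
  by_cases hlarge : 1 ≤ x ∧ 1 ≤ ℓ
  · calc x ^ ℓ ≤ exp (2 / k) * Gamma ((ℓ + 1) / k) * exp (exp 2 * x ^ k) :=
          pow_le_exp_mul_Gamma_mul_exp_of_one_le hk hlarge.1 hlarge.2
      _ ≤ _ := by gcongr; linarith
  · have hsmall : x ^ ℓ ≤ 1 := by
      rcases not_and_or.mp hlarge with h | h
      · exact pow_le_one₀ hx (by linarith)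
      · simp [Nat.lt_one_iff.mp (not_le.mp h)]
    have h6 : 1 ≤ 6 * Gamma ((ℓ + 1) / k) := by linarith [inv_six_le_Gamma hs]
    calc x ^ ℓ ≤ 1 := hsmall
      _ ≤ 6 * Gamma ((ℓ + 1) / k) * exp (2 / k) * exp (exp 2 * x ^ k) :=
          one_le_mul_of_one_le_of_one_le (one_le_mul_of_one_le_of_one_le h6 h1) h2
      _ = _ := by ring

theorem tsum_pow_div_Gamma_le {k y : ℝ} (hk : 0 < k) (hy : 0 ≤ y) :
    ∑' ℓ : ℕ, y ^ ℓ / Gamma ((ℓ + 1) / k) ≤ 12 * exp (2 / k) * exp (exp 2 * (2 * y) ^ k) := by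
  set B := 6 * exp (2 / k) * exp (exp 2 * (2 * y) ^ k)
  have hterm (ℓ : ℕ) : y ^ ℓ / Gamma ((ℓ + 1) / k) ≤ B * (1 / 2) ^ ℓ := by
    have hΓ : 0 < Gamma ((ℓ + 1) / k) := Gamma_pos_of_pos (by positivity)
    rw [div_le_iff₀ hΓ]
    calc y ^ ℓ = (1 / 2) ^ ℓ * (2 * y) ^ ℓ := by rw [← mul_pow]; ring
      _ ≤ (1 / 2) ^ ℓ * (6 * exp (2 / k) * Gamma ((ℓ + 1) / k) * exp (exp 2 * (2 * y) ^ k)) := by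
          gcongr; exact pow_le_Gamma_mul_exp_rpow hk (by positivity) ℓ
      _ = _ := by ring
  have hgeom : Summable fun ℓ : ℕ ↦ B * (1 / 2 : ℝ) ^ ℓ := summable_geometric_two.mul_left B
  have hnonneg (ℓ : ℕ) : 0 ≤ y ^ ℓ / Gamma ((ℓ + 1) / k) :=
    div_nonneg (by positivity) (Gamma_pos_of_pos (by positivity)).le
  calc ∑' ℓ : ℕ, y ^ ℓ / Gamma ((ℓ + 1) / k) ≤ ∑' ℓ : ℕ, B * (1 / 2) ^ ℓ :=
        (hgeom.of_nonneg_of_le hnonneg hterm).tsum_le_tsum hterm hgeom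
    _ = _ := by rw [tsum_mul_left, tsum_geometric_two]; ring

theorem stmt_15_general (k A C c : ℝ) (hk : 0 < k) (hA : 0 < A) (hC : 0 < C) :
    ∃ M > (0:ℝ), ∃ c' > c, ∀ ξ > (0:ℝ),
      (∑' ℓ : ℕ, A * C ^ (ℓ + 1) * ξ ^ ((ℓ + 1 : ℝ) - k) * exp (c * ξ ^ k) /
          Gamma ((ℓ + 1 : ℝ) / k))
        ≤ M * ξ ^ (1 - k) * exp (c' * ξ ^ k) := by
  refine ⟨12 * exp (2 / k) * A * C, by positivity, c + exp 2 * (2 * C) ^ k,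
    lt_add_of_pos_right c (by positivity), ?_⟩
  intro ξ hξ
  set P := A * C * ξ ^ (1 - k) * exp (c * ξ ^ k) with hP
  have hterm (ℓ : ℕ) : A * C ^ (ℓ + 1) * ξ ^ ((ℓ + 1 : ℝ) - k) * exp (c * ξ ^ k) /
      Gamma ((ℓ + 1 : ℝ) / k) = P * ((C * ξ) ^ ℓ / Gamma ((ℓ + 1) / k)) := by
    rw [show (ℓ + 1 : ℝ) - k = ℓ + (1 - k) by ring, rpow_add hξ, rpow_natCast]
    ring
  rw [tsum_congr hterm, tsum_mul_left]
  calc P * ∑' ℓ : ℕ, (C * ξ) ^ ℓ / Gamma ((ℓ + 1) / k)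
      ≤ P * (12 * exp (2 / k) * exp (exp 2 * (2 * (C * ξ)) ^ k)) := by
        gcongr
        exact tsum_pow_div_Gamma_le hk (by positivity)
    _ = _ := by
        rw [← mul_assoc 2 C ξ, mul_rpow (by positivity) hξ.le, add_mul, exp_add, hP]
        ring_nf

theorem stmt_15 (k A C c : ℝ) (hk : 0 < k) (hA : 0 < A) (hC : 0 < C) (hc : 0 < c) :
    ∃ M > (0:ℝ), ∃ c' > c, ∀ ξ > (0:ℝ),
      (∑' ℓ : ℕ, A * C ^ (ℓ + 1) * ξ ^ ((ℓ + 1 : ℝ) - k) * exp (c * ξ ^ k) /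
          Gamma ((ℓ + 1 : ℝ) / k))
        ≤ M * ξ ^ (1 - k) * exp (c' * ξ ^ k) :=
  stmt_15_general k A C c hk hA hC
end

section
/- Let k > 0, 0 < R' < R, K ≥ 0, c ≥ 0, κ ≥ k, and N ≥ 1. Then there exist M > 0 and c' ≥ c such that for every ξ > 0, K e^{cξ^κ} Σ_{C ∈ ℕ^N} (R'/R)^{|C|} ξ^{|C|+1-k}/Γ((|C|+1)/k) ≤ M ξ^{1-k} e^{c'ξ^κ}/Γ(1/k). -/
open Real MeasureTheory Set

lemma gamma_lb {s x : ℝ} (hs : 0 < s) (hx : 1 ≤ x) :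
    x ^ (s - 1) ≤ 2 * exp (x + 1) * Gamma s := by
  have hx0 : (0:ℝ) < x := lt_of_lt_of_le one_pos hx
  have hint : IntegrableOn (fun t : ℝ => exp (-t) * t ^ (s - 1)) (Ioi 0) :=
    Real.GammaIntegral_convergent hs
  have hsub : Ioc x (x + 1) ⊆ Ioi (0:ℝ) := fun t ht => lt_trans hx0 ht.1
  -- pointwise lower bound on Ioc x (x+1)
  have hpt : ∀ t ∈ Ioc x (x + 1),
      exp (-(x+1)) * (x ^ (s - 1) / 2) ≤ exp (-t) * t ^ (s - 1) := by
    intro t ht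
    have ht0 : 0 < t := lt_trans hx0 ht.1
    have h1 : exp (-(x+1)) ≤ exp (-t) := exp_le_exp.mpr (by linarith [ht.2])
    have h2 : x ^ (s - 1) / 2 ≤ t ^ (s - 1) := by
      rcases le_or_gt 1 s with hs1 | hs1
      · have : x ^ (s-1) ≤ t ^ (s-1) :=
          Real.rpow_le_rpow hx0.le ht.1.le (by linarith)
        nlinarith [Real.rpow_nonneg hx0.le (s-1)]
      · -- s < 1 : t^(s-1) ≥ (x+1)^(s-1) ≥ x^(s-1)/2
        have h3 : (x+1) ^ (s-1) ≤ t ^ (s-1) :=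
          Real.rpow_le_rpow_of_nonpos ht0 ht.2 (by linarith)
        have h4 : x ^ (s-1) ≤ 2 * (x+1) ^ (s-1) := by
          have hxx : x = (x+1) * (x/(x+1)) := by field_simp
          have hb : (1:ℝ) ≤ (x+1)/x := by
            rw [le_div_iff₀ hx0]; linarith
          have h5 : ((x+1)/x) ^ (1-s) ≤ ((x+1)/x) ^ (1:ℝ) :=
            Real.rpow_le_rpow_of_exponent_le hb (by linarith)
          have h6 : (x/(x+1)) ^ (s-1) = ((x+1)/x) ^ (1-s) := by
            rw [show s-1 = -(1-s) by ring, Real.rpow_neg (by positivity),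
              ← Real.inv_rpow (by positivity), inv_div]
          have h7 : (x/(x+1)) ^ (s-1) ≤ 2 := by
            rw [h6]
            calc ((x+1)/x) ^ (1-s) ≤ ((x+1)/x) ^ (1:ℝ) := h5
              _ = (x+1)/x := Real.rpow_one _
              _ ≤ 2 := by rw [div_le_iff₀ hx0]; linarith
          calc x ^ (s-1) = ((x+1)*(x/(x+1))) ^ (s-1) := by rw [← hxx]
            _ = (x+1)^(s-1)*(x/(x+1))^(s-1) := Real.mul_rpow (by positivity) (by positivity)
            _ ≤ (x+1)^(s-1)*2 := mul_le_mul_of_nonneg_left h7 (Real.rpow_nonneg (by positivity) _)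
            _ = 2*(x+1)^(s-1) := mul_comm _ _
        linarith
    calc exp (-(x+1)) * (x ^ (s - 1) / 2) ≤ exp (-t) * (x ^ (s-1)/2) := by
          apply mul_le_mul_of_nonneg_right h1
          positivity
      _ ≤ exp (-t) * t ^ (s - 1) := by
          apply mul_le_mul_of_nonneg_left h2 (exp_nonneg _)
  have hIoc : IntegrableOn (fun t : ℝ => exp (-t) * t ^ (s - 1)) (Ioc x (x+1)) :=
    hint.mono_set hsub
  have hlow : exp (-(x+1)) * (x ^ (s - 1) / 2) ≤ ∫ t in Ioc x (x+1), exp (-t) * t ^ (s-1) := by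
    have := setIntegral_mono_on (μ := volume) (s := Ioc x (x+1))
      (f := fun _ => exp (-(x+1)) * (x ^ (s - 1) / 2))
      (g := fun t => exp (-t) * t ^ (s-1))
      ((integrableOn_const_iff).mpr (Or.inr (by simp))) hIoc measurableSet_Ioc hpt
    simpa using this
  have hmono : ∫ t in Ioc x (x+1), exp (-t) * t ^ (s-1) ≤ Gamma s := by
    rw [Real.Gamma_eq_integral hs]
    apply setIntegral_mono_set hint
    · filter_upwards [ae_restrict_mem measurableSet_Ioi] with t ht
      rw [mem_Ioi] at ht
      positivity
    · exact Filter.Eventually.of_forall hsub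
  have hfin := hlow.trans hmono
  have h1 : exp (x+1) * exp (-(x+1)) = 1 := by rw [Real.exp_neg]; exact mul_inv_cancel₀ (Real.exp_ne_zero _)
  nlinarith [hfin, h1, Real.exp_pos (x+1), Real.exp_pos (-(x+1)),
    Real.rpow_nonneg hx0.le (s-1)]

lemma term_bound {k κ ξ : ℝ} (hk : 0 < k) (hκ : k ≤ κ) (hξ : 0 < ξ) (m : ℕ) :
    ξ ^ ((m : ℝ) + 1 - k) / Gamma (((m : ℝ) + 1) / k)
      ≤ 2 * exp 2 * exp (2 * ξ ^ κ) * ξ ^ (1 - k) := by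
  set s : ℝ := ((m : ℝ) + 1) / k with hs_def
  have hs : 0 < s := by positivity
  have hG : 0 < Gamma s := Real.Gamma_pos_of_pos hs
  have hsplit : ξ ^ ((m : ℝ) + 1 - k) = ξ ^ (m : ℝ) * ξ ^ (1 - k) := by
    rw [← Real.rpow_add hξ]; ring_nf
  have hexp1 : (1:ℝ) ≤ exp (2 * ξ ^ κ) := by
    rw [← Real.exp_zero]; apply exp_le_exp.mpr; positivity
  rcases le_or_gt 1 ξ with hξ1 | hξ1
  · -- ξ ≥ 1
    have hx : 1 ≤ ξ ^ k := Real.one_le_rpow hξ1 hk.le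
    have hA := gamma_lb hs hx
    have hxs : (ξ ^ k) ^ (s - 1) = ξ ^ ((m : ℝ) + 1 - k) := by
      rw [← Real.rpow_mul hξ.le]
      congr 1
      rw [hs_def]
      have hk0 : k ≠ 0 := ne_of_gt hk
      field_simp
    rw [hxs] at hA
    -- ξ^k ≤ ξ^κ
    have hB : ξ ^ k ≤ ξ ^ κ := Real.rpow_le_rpow_of_exponent_le hξ1 hκ
    -- ξ^(k-1) ≤ exp (ξ^κ)
    have hlog : 0 ≤ log ξ := Real.log_nonneg hξ1
    have hC : ξ ^ (k - 1) ≤ exp (ξ ^ κ) := by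
      have h1 : ξ ^ (k - 1) ≤ ξ ^ k :=
        Real.rpow_le_rpow_of_exponent_le hξ1 (by linarith)
      have h2 : ξ ^ k = exp (k * log ξ) := by
        rw [Real.rpow_def_of_pos hξ, mul_comm]
      have h3 : k * log ξ ≤ κ * log ξ := mul_le_mul_of_nonneg_right hκ hlog
      have h4 : κ * log ξ = log (ξ ^ κ) := (Real.log_rpow hξ κ).symm
      have h5 : log (ξ ^ κ) ≤ ξ ^ κ := by
        have := Real.log_le_sub_one_of_pos (Real.rpow_pos_of_pos hξ κ)
        linarith
      apply h1.trans
      rw [h2]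
      apply exp_le_exp.mpr
      linarith
    -- combine
    have hinv : ξ ^ (1 - k) = (ξ ^ (k - 1))⁻¹ := by
      rw [← Real.rpow_neg hξ.le]; ring_nf
    have hkm1pos : 0 < ξ ^ (k - 1) := Real.rpow_pos_of_pos hξ _
    have hD : 1 ≤ exp (ξ ^ κ) * ξ ^ (1 - k) := by
      rw [hinv, ← div_eq_mul_inv, le_div_iff₀ hkm1pos, one_mul]
      exact hC
    rw [div_le_iff₀ hG]
    calc ξ ^ ((m : ℝ) + 1 - k) ≤ 2 * exp (ξ ^ k + 1) * Gamma s := hA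
      _ = 2 * exp 1 * exp (ξ ^ k) * Gamma s := by
          rw [Real.exp_add]; ring
      _ ≤ 2 * exp 1 * exp (ξ ^ κ) * Gamma s := by
          gcongr
      _ = (2 * exp 1 * Gamma s) * (exp (ξ ^ κ) * 1) := by ring
      _ ≤ (2 * exp 1 * Gamma s) * (exp (ξ ^ κ) * (exp (ξ ^ κ) * ξ ^ (1 - k))) := by
          apply mul_le_mul_of_nonneg_left
          · apply mul_le_mul_of_nonneg_left hD (exp_nonneg _)
          · positivity
      _ = 2 * exp 1 * (exp (ξ ^ κ) * exp (ξ ^ κ)) * ξ ^ (1 - k) * Gamma s := by ring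
      _ = 2 * exp 1 * exp (2 * ξ ^ κ) * ξ ^ (1 - k) * Gamma s := by
          rw [← Real.exp_add, ← two_mul]
      _ ≤ 2 * exp 2 * exp (2 * ξ ^ κ) * ξ ^ (1 - k) * Gamma s := by
          gcongr
          exact one_le_two
  · -- ξ < 1
    have hA := gamma_lb hs (le_refl (1:ℝ))
    rw [Real.one_rpow] at hA
    have h1k : (1:ℝ) + 1 = 2 := by norm_num
    rw [h1k] at hA
    have hm1 : ξ ^ (m : ℝ) ≤ 1 :=
      Real.rpow_le_one hξ.le hξ1.le (by positivity)
    have hpos : 0 < ξ ^ (1 - k) := Real.rpow_pos_of_pos hξ _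
    rw [hsplit, div_le_iff₀ hG]
    have key : ξ ^ (m:ℝ) * ξ ^ (1-k) ≤ ξ ^ (1-k) := by
      nlinarith
    calc ξ ^ (m:ℝ) * ξ ^ (1-k) ≤ ξ ^ (1-k) := key
      _ = 1 * ξ ^ (1-k) := (one_mul _).symm
      _ ≤ (2 * exp 2 * Gamma s) * ξ ^ (1-k) := by
          apply mul_le_mul_of_nonneg_right hA hpos.le
      _ = (2 * exp 2 * ξ ^ (1-k) * Gamma s) * 1 := by ring
      _ ≤ (2 * exp 2 * ξ ^ (1-k) * Gamma s) * exp (2 * ξ ^ κ) := by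
          apply mul_le_mul_of_nonneg_left hexp1 (by positivity)
      _ = 2 * exp 2 * exp (2 * ξ ^ κ) * ξ ^ (1-k) * Gamma s := by ring


lemma summable_pow_sum {r : ℝ} (h0 : 0 ≤ r) (h1 : r < 1) (N : ℕ) :
    Summable (fun C : Fin N → ℕ => r ^ (∑ i, C i)) := by
  induction N with
  | zero => exact .of_finite
  | succ n ih =>
    have h := (summable_geometric_of_lt_one h0 h1).mul_of_nonneg ih
      (fun _ => pow_nonneg h0 _) (fun _ => pow_nonneg h0 _)
    rw [← (Fin.consEquiv (fun _ : Fin (n+1) => ℕ)).summable_iff]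
    refine h.congr fun p => ?_
    simp only [Function.comp_apply, Fin.consEquiv_apply, Fin.sum_cons, pow_add]


set_option maxHeartbeats 1000000 in
theorem stmt_18 (k R R' K c κ : ℝ) (N : ℕ) (hk : 0 < k) (hR' : 0 < R') (hRR : R' < R)
    (hK : 0 ≤ K) (hc : 0 ≤ c) (hκ : k ≤ κ) (hN : 1 ≤ N) :
    ∃ M > (0:ℝ), ∃ c' ≥ c, ∀ ξ > (0:ℝ),
      K * exp (c * ξ ^ κ) *
          (∑' C : Fin N → ℕ, (R' / R) ^ (∑ i, C i) *
            ξ ^ ((∑ i, C i : ℝ) + 1 - k) / Gamma (((∑ i, C i : ℝ) + 1) / k))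
        ≤ M * ξ ^ (1 - k) * exp (c' * ξ ^ κ) / Gamma (1 / k) := by
  have hR : 0 < R := hR'.trans hRR
  set r : ℝ := R' / R with hr_def
  have hr0 : 0 ≤ r := by positivity
  have hr1 : r < 1 := (div_lt_one hR).mpr hRR
  have hDs : Summable (fun C : Fin N → ℕ => r ^ (∑ i, C i)) := summable_pow_sum hr0 hr1 N
  set D : ℝ := ∑' C : Fin N → ℕ, r ^ (∑ i, C i) with hD_def
  have hD0 : 0 ≤ D := tsum_nonneg fun C => pow_nonneg hr0 _
  have hGk : 0 < Gamma (1/k) := Real.Gamma_pos_of_pos (by positivity)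
  have hM0 : (0:ℝ) < 2 * exp 2 * K * Gamma (1/k) * D + 1 := by
    have := mul_nonneg (mul_nonneg (mul_nonneg
      (mul_nonneg (by norm_num : (0:ℝ) ≤ 2) (Real.exp_nonneg 2)) hK) hGk.le) hD0
    linarith
  refine ⟨2 * exp 2 * K * Gamma (1/k) * D + 1, hM0, c + 2, by linarith, ?_⟩
  intro ξ hξ
  simp only [← Nat.cast_sum]
  set B : ℝ := 2 * exp 2 * exp (2 * ξ ^ κ) * ξ ^ (1 - k) with hB_def
  have hB0 : 0 ≤ B := by positivity
  have hbound : ∀ C : Fin N → ℕ,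
      r ^ (∑ i, C i) * ξ ^ (((∑ i, C i : ℕ) : ℝ) + 1 - k) / Gamma ((((∑ i, C i : ℕ) : ℝ) + 1) / k)
        ≤ r ^ (∑ i, C i) * B := by
    intro C
    rw [mul_div_assoc]
    exact mul_le_mul_of_nonneg_left (term_bound hk hκ hξ (∑ i, C i)) (pow_nonneg hr0 _)
  have hs2 : Summable (fun C : Fin N → ℕ =>
      r ^ (∑ i, C i) * ξ ^ (((∑ i, C i : ℕ) : ℝ) + 1 - k) / Gamma ((((∑ i, C i : ℕ) : ℝ) + 1) / k)) := by
    refine Summable.of_nonneg_of_le ?_ hbound (hDs.mul_right B)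
    intro C
    have hGC : 0 < Gamma ((((∑ i, C i : ℕ) : ℝ) + 1) / k) := Real.Gamma_pos_of_pos (by positivity)
    positivity
  have hT : (∑' C : Fin N → ℕ, r ^ (∑ i, C i) * ξ ^ (((∑ i, C i : ℕ) : ℝ) + 1 - k) /
      Gamma ((((∑ i, C i : ℕ) : ℝ) + 1) / k)) ≤ D * B :=
    le_trans (Summable.tsum_le_tsum hbound hs2 (hDs.mul_right B)) (le_of_eq tsum_mul_right)
  have hKe : 0 ≤ K * exp (c * ξ ^ κ) := mul_nonneg hK (exp_nonneg _)
  refine le_trans (mul_le_mul_of_nonneg_left hT hKe) ?_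
  have hMD : 2 * exp 2 * K * D ≤ (2 * exp 2 * K * Gamma (1/k) * D + 1) / Gamma (1/k) := by
    rw [le_div_iff₀ hGk]
    nlinarith
  calc K * exp (c * ξ ^ κ) * (D * B)
      = (2 * exp 2 * K * D) * (ξ ^ (1-k) * (exp (c * ξ ^ κ) * exp (2 * ξ ^ κ))) := by
        rw [hB_def]; ring
    _ = (2 * exp 2 * K * D) * (ξ ^ (1-k) * exp ((c+2) * ξ ^ κ)) := by
        rw [← Real.exp_add, show c * ξ ^ κ + 2 * ξ ^ κ = (c+2) * ξ ^ κ by ring]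
    _ ≤ ((2 * exp 2 * K * Gamma (1/k) * D + 1) / Gamma (1/k)) *
          (ξ ^ (1-k) * exp ((c+2) * ξ ^ κ)) := by
        apply mul_le_mul_of_nonneg_right hMD (by positivity)
    _ = (2 * exp 2 * K * Gamma (1/k) * D + 1) * ξ ^ (1-k) * exp ((c+2) * ξ ^ κ) / Gamma (1/k) := by
        ring
end
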